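/- Every hypothesis class H with LDim(H) ≤ d admits a valid (p,d)-decomposition tree, for any p ∈ ℕ. -/

import Mathlib

open scoped Classical

universe u

variable {X : Type u}

/-- Restriction of a hypothesis class to hypotheses labelling `x` with `y`. -/
def restrict (H : Set (X → Bool)) (x : X) (y : Bool) : Set (X → Bool) :=
  {h ∈ H | h x = y}

/-- Restriction along a sequence of labelled examples. -/
def restrictSeq (H : Set (X → Bool)) : List (X × Bool) → Set (X → Bool)
  | [] => H
  | (x, y) :: rest => restrictSeq (restrict H x y) rest

/-- `Shatters H d` : `H` shatters a complete mistake tree of depth `d`. -/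
def Shatters (H : Set (X → Bool)) : ℕ → Prop
  | 0 => H.Nonempty
  | d + 1 => ∃ x : X, Shatters (restrict H x false) d ∧ Shatters (restrict H x true) d

/-- The Littlestone dimension, with value `⊥` for the empty class
(the usual `-1` convention) and `⊤` for infinite dimension. -/
noncomputable def LDim (H : Set (X → Bool)) : WithBot ℕ∞ :=
  sSup {e : WithBot ℕ∞ | ∃ n : ℕ, e = ((n : ℕ∞) : WithBot ℕ∞) ∧ Shatters H n}

/-- Littlestone dimension, truncated to a natural number. -/
noncomputable def ldimN (H : Set (X → Bool)) : ℕ :=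
  ((LDim H).unbotD 0).toNat

/-- The standard optimal algorithm of a class. -/
noncomputable def SOA (H : Set (X → Bool)) (x : X) : Bool :=
  if LDim (restrict H x false) = LDim H then false else true

/-- Restricting `H` along points `xs`, each labelled by `SOA H`. -/
noncomputable def soaChain (H : Set (X → Bool)) (xs : List X) : Set (X → Bool) :=
  restrictSeq H (xs.map fun x => (x, SOA H x))

/-- `H` is `k`-irreducible. -/
noncomputable def Irred (k : ℕ) (H : Set (X → Bool)) : Prop :=
  ∀ xs : List X, xs.length = k → LDim (soaChain H xs) = LDim H

/-- `H` is `k`-reducible. -/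
noncomputable def Reducible (k : ℕ) (H : Set (X → Bool)) : Prop :=
  ∃ xs : List X, xs.length = k ∧ LDim (soaChain H xs) < LDim H

/-- Binary decomposition trees: internal nodes labelled by domain points. -/
inductive DTree (X : Type u) : Type u where
  | leaf : DTree X
  | node : X → DTree X → DTree X → DTree X

/-- The example-sequences of all leaves of a tree (below the prefix `pre`). -/
def DTree.leafPaths : DTree X → List (X × Bool) → List (List (X × Bool))
  | .leaf, pre => [pre]
  | .node x l r, pre => l.leafPaths (pre ++ [(x, false)]) ++ r.leafPaths (pre ++ [(x, true)])

/-- The example-sequences of all nodes of a tree (below the prefix `pre`). -/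
def DTree.nodePaths : DTree X → List (X × Bool) → List (List (X × Bool))
  | .leaf, pre => [pre]
  | .node x l r, pre =>
      pre :: (l.nodePaths (pre ++ [(x, false)]) ++ r.nodePaths (pre ++ [(x, true)]))

/-- Validity of a `(p,d)`-decomposition tree of `H`. -/
noncomputable def ValidTree (p d : ℕ) (H : Set (X → Bool)) (t : DTree X) : Prop :=
  (∀ s ∈ t.nodePaths [], s.length ≤ p * (2 ^ (d - ldimN (restrictSeq H s) + 1) - 1)) ∧
  (∀ s ∈ t.leafPaths [], s.length ≤ p * (2 ^ (d - ldimN (restrictSeq H s)) - 1) ∧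
    Irred (p * 2 ^ (d - ldimN (restrictSeq H s))) (restrictSeq H s))

/-- The degree of a decomposition tree: the largest leaf Littlestone dimension. -/
noncomputable def degree (H : Set (X → Bool)) (t : DTree X) : ℕ :=
  ((t.leafPaths []).map fun s => ldimN (restrictSeq H s)).foldr max 0

/-- The `(p,d)`-decomposition dimension of `H`. -/
noncomputable def DDim (p d : ℕ) (H : Set (X → Bool)) : ℕ :=
  sInf {t : ℕ | ∃ tr : DTree X, ValidTree p d H tr ∧ degree H tr = t}

/-- An optimal `(p,d)`-decomposition tree of `H`. -/
noncomputable def OptimalTree (p d : ℕ) (H : Set (X → Bool)) (tr : DTree X) : Prop :=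
  ValidTree p d H tr ∧ degree H tr = DDim p d H

/-- `f` is `(p,d)`-essential to `H`: it arises as the `SOA` of a leaf of maximal
dimension in every optimal `(p,d)`-decomposition of `H`. -/
noncomputable def Essential (p d : ℕ) (H : Set (X → Bool)) (f : X → Bool) : Prop :=
  ∀ tr : DTree X, OptimalTree p d H tr →
    ∃ s ∈ tr.leafPaths [], ldimN (restrictSeq H s) = DDim p d H ∧ SOA (restrictSeq H s) = f

section Aux

variable {X : Type u}

lemma restrict_subset (H : Set (X → Bool)) (x : X) (y : Bool) : restrict H x y ⊆ H :=
  fun _ hh => hh.1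

lemma restrict_mono {H1 H2 : Set (X → Bool)} (h : H1 ⊆ H2) (x : X) (y : Bool) :
    restrict H1 x y ⊆ restrict H2 x y := fun g hg => ⟨h hg.1, hg.2⟩

lemma restrictSeq_subset : ∀ (s : List (X × Bool)) (H : Set (X → Bool)), restrictSeq H s ⊆ H
  | [], _ => subset_rfl
  | (x, y) :: rest, H =>
      (restrictSeq_subset rest (restrict H x y)).trans (restrict_subset H x y)

lemma restrict_empty (x : X) (y : Bool) : restrict (∅ : Set (X → Bool)) x y = ∅ := by
  ext g; simp [restrict]

lemma restrictSeq_empty : ∀ s : List (X × Bool), restrictSeq (∅ : Set (X → Bool)) s = ∅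
  | [] => rfl
  | (x, y) :: rest => by rw [restrictSeq, restrict_empty, restrictSeq_empty]

lemma Shatters.mono : ∀ (n : ℕ) {H1 H2 : Set (X → Bool)}, H1 ⊆ H2 →
    Shatters H1 n → Shatters H2 n
  | 0, _, _, h, hs => Set.Nonempty.mono h hs
  | n + 1, _, _, h, ⟨x, hf, ht⟩ =>
      ⟨x, Shatters.mono n (restrict_mono h x false) hf,
        Shatters.mono n (restrict_mono h x true) ht⟩


lemma Shatters.down_succ {n : ℕ} {H : Set (X → Bool)} (h : Shatters H (n + 1)) :
    Shatters H n := by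
  obtain ⟨x, hf, _⟩ := h
  exact Shatters.mono n (restrict_subset H x false) hf

lemma Shatters.down {H : Set (X → Bool)} : ∀ {n m : ℕ}, m ≤ n → Shatters H n → Shatters H m := by
  intro n
  induction n with
  | zero => intro m hm hs; exact Nat.le_zero.1 hm ▸ hs
  | succ n ih =>
      intro m hm hs
      rcases Nat.lt_succ_iff_lt_or_eq.1 (Nat.lt_succ_of_le hm) with h | h
      · exact ih (Nat.lt_succ_iff.1 h) hs.down_succ
      · exact h ▸ hs

end Aux
lemma le_LDim_of_shatters {H : Set (X → Bool)} {n : ℕ} (h : Shatters H n) :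
    ((n : ℕ∞) : WithBot ℕ∞) ≤ LDim H :=
  le_sSup ⟨n, rfl, h⟩

lemma LDim_le_iff {H : Set (X → Bool)} {c : WithBot ℕ∞} :
    LDim H ≤ c ↔ ∀ n : ℕ, Shatters H n → ((n : ℕ∞) : WithBot ℕ∞) ≤ c := by
  rw [LDim, sSup_le_iff]
  constructor
  · intro h n hn; exact h _ ⟨n, rfl, hn⟩
  · rintro h e ⟨n, rfl, hn⟩; exact h n hn

lemma LDim_mono {H1 H2 : Set (X → Bool)} (h : H1 ⊆ H2) : LDim H1 ≤ LDim H2 :=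
  LDim_le_iff.2 fun n hn => le_LDim_of_shatters (hn.mono _ h)

lemma LDim_empty : LDim (∅ : Set (X → Bool)) = ⊥ := by
  have hns : ∀ n : ℕ, ¬ Shatters (∅ : Set (X → Bool)) n := by
    intro n
    cases n with
    | zero => simp [Shatters]
    | succ n => rintro ⟨x, hf, _⟩; exact absurd (hf.down (Nat.zero_le n)) (by simp [restrict_empty, Shatters])
  rw [eq_bot_iff, LDim_le_iff]
  intro n hn; exact absurd hn (hns n)

lemma shatters_of_LDim_eq {H : Set (X → Bool)} {n : ℕ}
    (h : LDim H = ((n : ℕ∞) : WithBot ℕ∞)) : Shatters H n := by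
  by_contra hn
  have hub : ∀ m : ℕ, Shatters H m → m < n := by
    intro m hm
    by_contra hmn
    exact hn (hm.down (Nat.le_of_not_lt hmn))
  cases n with
  | zero =>
      have : LDim H = ⊥ := by
        rw [eq_bot_iff, LDim_le_iff]; intro m hm; exact absurd (hub m hm) (by omega)
      rw [this] at h; exact (by simp : (⊥ : WithBot ℕ∞) ≠ ((0:ℕ∞) : WithBot ℕ∞)) h
  | succ k =>
      have : LDim H ≤ ((k : ℕ∞) : WithBot ℕ∞) := by
        rw [LDim_le_iff]; intro m hm
        have := hub m hm
        exact_mod_cast (by omega : m ≤ k)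
      rw [h] at this
      exact absurd (by exact_mod_cast this : k + 1 ≤ k) (by omega)

lemma nonempty_LDim_ge {H : Set (X → Bool)} (h : H.Nonempty) :
    ((0 : ℕ∞) : WithBot ℕ∞) ≤ LDim H :=
  le_LDim_of_shatters (show Shatters H 0 from h)

lemma exists_nat_of_LDim {H : Set (X → Bool)} (hH : H.Nonempty) {n : ℕ}
    (hle : LDim H ≤ ((n : ℕ∞) : WithBot ℕ∞)) :
    ∃ m : ℕ, m ≤ n ∧ LDim H = ((m : ℕ∞) : WithBot ℕ∞) := by
  have h0 := nonempty_LDim_ge hH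
  have hne : LDim H ≠ ⊥ := by intro hb; rw [hb] at h0; exact absurd h0 (by simp)
  obtain ⟨e, he⟩ := WithBot.ne_bot_iff_exists.1 hne
  rw [← he] at hle
  have he' : e ≤ (n : ℕ∞) := WithBot.coe_le_coe.1 hle
  lift e to ℕ using ne_top_of_le_ne_top (by simp) he'
  exact ⟨e, by exact_mod_cast he', by rw [← he]⟩
lemma ldimN_eq {H : Set (X → Bool)} {m : ℕ} (h : LDim H = ((m : ℕ∞) : WithBot ℕ∞)) :
    ldimN H = m := by
  simp [ldimN, h]

lemma ldimN_le {H : Set (X → Bool)} {n : ℕ} (h : LDim H ≤ ((n : ℕ∞) : WithBot ℕ∞)) :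
    ldimN H ≤ n := by
  rcases Set.eq_empty_or_nonempty H with hE | hne
  · subst hE; simp [ldimN, LDim_empty]
  · obtain ⟨m, hmn, hm⟩ := exists_nat_of_LDim hne h
    rw [ldimN_eq hm]; exact hmn

lemma LDim_le_coe_ldimN {H : Set (X → Bool)} {n : ℕ} (h : LDim H ≤ ((n : ℕ∞) : WithBot ℕ∞)) :
    LDim H ≤ ((ldimN H : ℕ∞) : WithBot ℕ∞) := by
  rcases Set.eq_empty_or_nonempty H with hE | hne
  · subst hE; rw [LDim_empty]; exact bot_le
  · obtain ⟨m, _, hm⟩ := exists_nat_of_LDim hne h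
    rw [hm, ldimN_eq hm]

lemma LDim_lt_imp {H : Set (X → Bool)} {n : ℕ} (h : LDim H < ((n : ℕ∞) : WithBot ℕ∞)) :
    LDim H ≤ (((n - 1 : ℕ) : ℕ∞) : WithBot ℕ∞) := by
  rcases Set.eq_empty_or_nonempty H with hE | hne
  · subst hE; rw [LDim_empty]; exact bot_le
  · obtain ⟨m, hmn, hm⟩ := exists_nat_of_LDim hne h.le
    rw [hm] at h ⊢
    have : m < n := by exact_mod_cast h
    exact_mod_cast (by omega : m ≤ n - 1)
lemma LDim_singleton (h : X → Bool) : LDim {h} = ((0 : ℕ∞) : WithBot ℕ∞) := by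
  apply le_antisymm
  · rw [LDim_le_iff]
    intro n hn
    rcases n with _ | m
    · exact le_rfl
    · exfalso
      obtain ⟨x, hf, ht⟩ := hn
      obtain ⟨gf, hgf1, hgf2⟩ := (hf.down (Nat.zero_le m) : Shatters _ 0)
      obtain ⟨gt, hgt1, hgt2⟩ := (ht.down (Nat.zero_le m) : Shatters _ 0)
      rw [Set.mem_singleton_iff] at hgf1 hgt1
      subst hgf1; subst hgt1
      rw [hgf2] at hgt2; exact Bool.false_ne_true hgt2
  · exact nonempty_LDim_ge ⟨h, rfl⟩

lemma restrict_singleton_self (h : X → Bool) (x : X) : restrict {h} x (h x) = {h} := by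
  ext g; simp only [restrict, Set.mem_setOf_eq, Set.mem_singleton_iff, Set.mem_sep_iff]
  constructor
  · rintro ⟨hg, _⟩; exact hg
  · rintro rfl; exact ⟨rfl, rfl⟩

lemma restrict_singleton_other (h : X → Bool) (x : X) : restrict {h} x (!h x) = ∅ := by
  ext g
  simp only [restrict, Set.mem_setOf_eq, Set.mem_singleton_iff, Set.mem_empty_iff_false,
    iff_false, not_and]
  rintro rfl
  cases g x <;> simp

lemma SOA_singleton (h : X → Bool) (x : X) : SOA {h} x = h x := by
  unfold SOA
  cases hx : h x
  · have : restrict {h} x false = {h} := by rw [← hx]; exact restrict_singleton_self h x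
    simp [this]
  · have : restrict {h} x false = ∅ := by
      have := restrict_singleton_other h x; rwa [hx] at this
    rw [this, LDim_empty, LDim_singleton]
    simp

lemma soaChain_singleton (h : X → Bool) : ∀ xs : List X, soaChain {h} xs = {h} := by
  intro xs
  unfold soaChain
  induction xs with
  | nil => rfl
  | cons x rest ih =>
      rw [List.map_cons, restrictSeq, SOA_singleton, restrict_singleton_self]
      exact ih

lemma irred_singleton (k : ℕ) (h : X → Bool) : Irred k {h} := fun xs _ => by
  rw [soaChain_singleton]

lemma LDim_eq_zero_singleton {H : Set (X → Bool)}
    (h : LDim H = ((0 : ℕ∞) : WithBot ℕ∞)) : ∃ f : X → Bool, H = {f} := by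
  obtain ⟨f, hf⟩ : H.Nonempty := shatters_of_LDim_eq h
  refine ⟨f, Set.eq_singleton_iff_unique_mem.2 ⟨hf, ?_⟩⟩
  intro g hg
  funext x
  by_contra hne
  have hsh : Shatters H 1 := by
    refine ⟨x, ?_, ?_⟩
    · cases hfx : f x
      · exact ⟨f, hf, hfx⟩
      · refine ⟨g, hg, ?_⟩; cases hgx : g x; · rfl
        · rw [hfx, hgx] at hne; exact absurd rfl hne
    · cases hfx : f x
      · refine ⟨g, hg, ?_⟩; cases hgx : g x
        · rw [hfx, hgx] at hne; exact absurd rfl hne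
        · rfl
      · exact ⟨f, hf, hfx⟩
  have := le_LDim_of_shatters hsh
  rw [h] at this
  exact absurd (by exact_mod_cast this : (1:ℕ) ≤ 0) (by omega)

lemma off_lt {C C' : Set (X → Bool)} (hsub : C' ⊆ C) {n : ℕ}
    (hC : LDim C = ((n : ℕ∞) : WithBot ℕ∞)) (hC' : LDim C' = LDim C) (x : X) :
    LDim (restrict C' x (!SOA C x)) < LDim C := by
  by_contra hno
  have hle : LDim (restrict C' x (!SOA C x)) ≤ LDim C :=
    (LDim_mono (restrict_subset C' x _)).trans (LDim_mono hsub)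
  have heq : LDim (restrict C' x (!SOA C x)) = LDim C := le_antisymm hle (not_lt.1 hno)
  have heqC : LDim (restrict C x (!SOA C x)) = LDim C :=
    le_antisymm (LDim_mono (restrict_subset C x _))
      (heq ▸ LDim_mono (restrict_mono hsub x _))
  by_cases hsoa : LDim (restrict C x false) = LDim C
  · have hb : SOA C x = false := by simp [SOA, hsoa]
    rw [hb] at heqC
    have hshf : Shatters (restrict C x false) n := shatters_of_LDim_eq (hsoa.trans hC)
    have hsht : Shatters (restrict C x true) n := by
      have := heqC.trans hC; exact shatters_of_LDim_eq (by simpa using this)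
    have hsh : Shatters C (n + 1) := ⟨x, hshf, hsht⟩
    have := le_LDim_of_shatters hsh
    rw [hC] at this
    exact absurd (by exact_mod_cast this : n + 1 ≤ n) (by omega)
  · have hb : SOA C x = true := by simp [SOA, hsoa]
    rw [hb] at heqC
    exact hsoa (by simpa using heqC)
lemma nodePaths_map : ∀ (t : DTree X) (pre : List (X × Bool)),
    t.nodePaths pre = (t.nodePaths []).map (pre ++ ·)
  | .leaf, pre => by simp [DTree.nodePaths]
  | .node x l r, pre => by
      rw [DTree.nodePaths, DTree.nodePaths, nodePaths_map l (pre ++ [(x, false)]),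
        nodePaths_map r (pre ++ [(x, true)]), nodePaths_map l ([] ++ [(x, false)]),
        nodePaths_map r ([] ++ [(x, true)])]
      simp [List.map_map, Function.comp_def, List.append_assoc]

lemma leafPaths_map : ∀ (t : DTree X) (pre : List (X × Bool)),
    t.leafPaths pre = (t.leafPaths []).map (pre ++ ·)
  | .leaf, pre => by simp [DTree.leafPaths]
  | .node x l r, pre => by
      rw [DTree.leafPaths, DTree.leafPaths, leafPaths_map l (pre ++ [(x, false)]),
        leafPaths_map r (pre ++ [(x, true)]), leafPaths_map l ([] ++ [(x, false)]),
        leafPaths_map r ([] ++ [(x, true)])]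
      simp [List.map_map, Function.comp_def, List.append_assoc]

lemma mem_nodePaths_node {s : List (X × Bool)} {x : X} {l r : DTree X} :
    s ∈ (DTree.node x l r).nodePaths [] ↔
      s = [] ∨ (∃ s' ∈ l.nodePaths [], s = (x, false) :: s') ∨
        (∃ s' ∈ r.nodePaths [], s = (x, true) :: s') := by
  rw [DTree.nodePaths, nodePaths_map l, nodePaths_map r]
  simp only [List.mem_cons, List.mem_append, List.mem_map, List.nil_append]
  constructor
  · rintro (rfl | ⟨s', hs', rfl⟩ | ⟨s', hs', rfl⟩)
    · exact Or.inl rfl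
    · exact Or.inr (Or.inl ⟨s', hs', rfl⟩)
    · exact Or.inr (Or.inr ⟨s', hs', rfl⟩)
  · rintro (rfl | ⟨s', hs', rfl⟩ | ⟨s', hs', rfl⟩)
    · exact Or.inl rfl
    · exact Or.inr (Or.inl ⟨s', hs', rfl⟩)
    · exact Or.inr (Or.inr ⟨s', hs', rfl⟩)

lemma mem_leafPaths_node {s : List (X × Bool)} {x : X} {l r : DTree X} :
    s ∈ (DTree.node x l r).leafPaths [] ↔
      (∃ s' ∈ l.leafPaths [], s = (x, false) :: s') ∨
        (∃ s' ∈ r.leafPaths [], s = (x, true) :: s') := by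
  rw [DTree.leafPaths, leafPaths_map l, leafPaths_map r]
  simp only [List.mem_append, List.mem_map, List.nil_append]
  constructor
  · rintro (⟨s', hs', rfl⟩ | ⟨s', hs', rfl⟩)
    · exact Or.inl ⟨s', hs', rfl⟩
    · exact Or.inr ⟨s', hs', rfl⟩
  · rintro (⟨s', hs', rfl⟩ | ⟨s', hs', rfl⟩)
    · exact Or.inl ⟨s', hs', rfl⟩
    · exact Or.inr ⟨s', hs', rfl⟩

/-- Validity of a subtree rooted at depth `j` with class `G`. -/
noncomputable def Good (p d : ℕ) (G : Set (X → Bool)) (j : ℕ) (t : DTree X) : Prop :=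
  (∀ s ∈ t.nodePaths [], j + s.length ≤ p * (2 ^ (d - ldimN (restrictSeq G s) + 1) - 1)) ∧
  (∀ s ∈ t.leafPaths [], j + s.length ≤ p * (2 ^ (d - ldimN (restrictSeq G s)) - 1) ∧
    Irred (p * 2 ^ (d - ldimN (restrictSeq G s))) (restrictSeq G s))

lemma pow_bound_mono (p : ℕ) {a b : ℕ} (h : a ≤ b) : p * (2 ^ a - 1) ≤ p * (2 ^ b - 1) :=
  Nat.mul_le_mul_left _ (Nat.sub_le_sub_right (Nat.pow_le_pow_right (by norm_num) h) 1)

lemma good_leaf {p d j : ℕ} {G : Set (X → Bool)}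
    (h1 : j ≤ p * (2 ^ (d - ldimN G) - 1))
    (h2 : Irred (p * 2 ^ (d - ldimN G)) G) : Good p d G j DTree.leaf := by
  constructor
  · intro s hs
    simp only [DTree.nodePaths, List.mem_singleton] at hs
    subst hs
    simpa [restrictSeq] using h1.trans (pow_bound_mono p (Nat.le_succ _))
  · intro s hs
    simp only [DTree.leafPaths, List.mem_singleton] at hs
    subst hs
    simpa [restrictSeq] using ⟨h1, h2⟩

lemma good_node {p d j : ℕ} {G : Set (X → Bool)} {x : X} {l r : DTree X}
    (hl : Good p d (restrict G x false) (j + 1) l)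
    (hr : Good p d (restrict G x true) (j + 1) r)
    (hroot : j ≤ p * (2 ^ (d - ldimN G + 1) - 1)) :
    Good p d G j (DTree.node x l r) := by
  constructor
  · intro s hs
    rcases mem_nodePaths_node.1 hs with rfl | ⟨s', hs', rfl⟩ | ⟨s', hs', rfl⟩
    · simpa [restrictSeq] using hroot
    · have := hl.1 s' hs'
      simpa [restrictSeq, Nat.add_comm, Nat.add_assoc, Nat.add_left_comm] using this
    · have := hr.1 s' hs'
      simpa [restrictSeq, Nat.add_comm, Nat.add_assoc, Nat.add_left_comm] using this
  · intro s hs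
    rcases mem_leafPaths_node.1 hs with ⟨s', hs', rfl⟩ | ⟨s', hs', rfl⟩
    · have := hl.2 s' hs'
      simpa [restrictSeq, Nat.add_comm, Nat.add_assoc, Nat.add_left_comm] using this
    · have := hr.2 s' hs'
      simpa [restrictSeq, Nat.add_comm, Nat.add_assoc, Nat.add_left_comm] using this
lemma inner (p d : ℕ) (G : Set (X → Bool)) (n' : ℕ)
    (hG : LDim G = ((n' : ℕ∞) : WithBot ℕ∞)) (h1 : 1 ≤ n') (hd : n' ≤ d)
    (OIH : ∀ (G'' : Set (X → Bool)) (j'' : ℕ),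
      LDim G'' ≤ (((n' - 1 : ℕ) : ℕ∞) : WithBot ℕ∞) →
      j'' ≤ p * (2 ^ (d - (n' - 1)) - 1) → ∃ t : DTree X, Good p d G'' j'' t) :
    ∀ (xs : List X) (G' : Set (X → Bool)) (j' : ℕ), G' ⊆ G →
      LDim (restrictSeq G' (xs.map fun x => (x, SOA G x))) < LDim G →
      j' + xs.length ≤ p * (2 ^ (d - n' + 1) - 1) →
      ∃ t : DTree X, Good p d G' j' t := by
  have hsub1 : d - n' + 1 = d - (n' - 1) := by omega
  intro xs
  induction xs with
  | nil =>
      intro G' j' hsub hchain hlen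
      simp only [List.map_nil] at hchain
      rw [hG] at hchain
      refine OIH G' j' (LDim_lt_imp hchain) ?_
      rw [← hsub1]
      simpa using hlen
  | cons x rest ih =>
      intro G' j' hsub hchain hlen
      simp only [List.length_cons] at hlen
      by_cases hdrop : LDim G' < LDim G
      · rw [hG] at hdrop
        refine OIH G' j' (LDim_lt_imp hdrop) ?_
        rw [← hsub1]; omega
      · have heq : LDim G' = LDim G := le_antisymm (LDim_mono hsub) (not_lt.1 hdrop)
        have hnG' : ldimN G' = n' := ldimN_eq (heq.trans hG)
        -- off-path child
        have hoff : LDim (restrict G' x (!SOA G x)) < LDim G := off_lt hsub hG heq x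
        rw [hG] at hoff
        obtain ⟨toff, htoff⟩ := OIH (restrict G' x (!SOA G x)) (j' + 1) (LDim_lt_imp hoff)
          (by rw [← hsub1]; omega)
        -- continuation child
        have hchain' :
            LDim (restrictSeq (restrict G' x (SOA G x)) (rest.map fun y => (y, SOA G y)))
              < LDim G := by
          simpa only [List.map_cons, restrictSeq] using hchain
        obtain ⟨tc, htc⟩ := ih (restrict G' x (SOA G x)) (j' + 1)
          ((restrict_subset G' x _).trans hsub) hchain' (by omega)
        have hroot : j' ≤ p * (2 ^ (d - ldimN G' + 1) - 1) := by rw [hnG']; omega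
        cases hsoa : SOA G x
        · refine ⟨DTree.node x tc toff, good_node ?_ ?_ hroot⟩
          · rw [← hsoa]; exact htc
          · have : (!SOA G x) = true := by rw [hsoa]; rfl
            rw [← this]; exact htoff
        · refine ⟨DTree.node x toff tc, good_node ?_ ?_ hroot⟩
          · have : (!SOA G x) = false := by rw [hsoa]; rfl
            rw [← this]; exact htoff
          · rw [← hsoa]; exact htc
lemma outer (p d : ℕ) : ∀ n : ℕ, n ≤ d → ∀ (G : Set (X → Bool)) (j : ℕ),
    LDim G ≤ ((n : ℕ∞) : WithBot ℕ∞) → j ≤ p * (2 ^ (d - n) - 1) →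
    ∃ t : DTree X, Good p d G j t := by
  intro n
  induction n using Nat.strong_induction_on with
  | _ n IH =>
    intro hnd G j hG hj
    have hn'n : ldimN G ≤ n := ldimN_le hG
    by_cases hirr : Irred (p * 2 ^ (d - ldimN G)) G
    · exact ⟨DTree.leaf,
        good_leaf (hj.trans (pow_bound_mono p (by omega))) hirr⟩
    · obtain ⟨xs, hxs, hne⟩ : ∃ xs : List X,
          xs.length = p * 2 ^ (d - ldimN G) ∧ LDim (soaChain G xs) ≠ LDim G := by
        unfold Irred at hirr; push_neg at hirr; exact hirr
      have hlt : LDim (soaChain G xs) < LDim G :=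
        lt_of_le_of_ne (LDim_mono (restrictSeq_subset _ _)) hne
      have hGne : G.Nonempty := by
        rcases Set.eq_empty_or_nonempty G with hE | h
        · subst hE
          rw [show soaChain (∅ : Set (X → Bool)) xs = ∅ from restrictSeq_empty _] at hlt
          exact absurd hlt (lt_irrefl _)
        · exact h
      obtain ⟨m, hmn, hm⟩ := exists_nat_of_LDim hGne hG
      have hmn' : ldimN G = m := ldimN_eq hm
      have hm1 : 1 ≤ m := by
        by_contra h0
        have hm0 : m = 0 := by omega
        subst hm0
        obtain ⟨f, hf⟩ := LDim_eq_zero_singleton hm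
        subst hf
        exact hne (by rw [soaChain_singleton])
      -- arithmetic for the invariant
      have hpow : 2 ^ (d - m + 1) = 2 * 2 ^ (d - m) := by rw [pow_succ]; ring
      have hpos : 1 ≤ 2 ^ (d - m) := Nat.one_le_two_pow
      have hinv : j + xs.length ≤ p * (2 ^ (d - m + 1) - 1) := by
        have h1 : j ≤ p * (2 ^ (d - m) - 1) :=
          hj.trans (pow_bound_mono p (by omega))
        have h2 : xs.length = p * 2 ^ (d - m) := by rw [hxs, hmn']
        have h3 : p * (2 ^ (d - m) - 1) + p * 2 ^ (d - m) = p * (2 ^ (d - m + 1) - 1) := by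
          rw [← Nat.mul_add]
          congr 1
          omega
        omega
      refine inner p d G m hm hm1 (by omega) ?_ xs G j subset_rfl hlt hinv
      intro G'' j'' hG'' hj''
      exact IH (m - 1) (by omega) (by omega) G'' j'' hG'' hj''

/-- every class of Littlestone dimension at most `d` admits a valid
`(p,d)`-decomposition tree, for any `p`. -/
theorem exists_valid_decomposition (H : Set (X → Bool)) (p d : ℕ)
    (hd : LDim H ≤ ((d : ℕ∞) : WithBot ℕ∞)) :
    ∃ t : DTree X, ValidTree p d H t := by
  obtain ⟨t, ht⟩ := outer p d d le_rfl H 0 hd (by simp)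
  exact ⟨t, ⟨fun s hs => by simpa using ht.1 s hs, fun s hs => by simpa using ht.2 s hs⟩⟩
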